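/- The minimum value of Σ_{i=1}^n (yᵢ - δᵢ)² over nonnegative vectors summing to y equals k*(λ*)² + Σ_{i=k*+1}^n δᵢ², where λ* = (Σ_{i=1}^{k*} δᵢ - y)/k* and k* is the largest k with Σ_{i=1}^k (δᵢ - δ_k) < y. -/

import Mathlib

/-!
With the threshold `λ = λ*`, the vector `zᵢ* = max (δᵢ - λ) 0` is feasible and optimal
("water filling"). Optimality is the KKT inequality: for every `z ≥ 0` and every `i`,
`(zᵢ - δᵢ)² ≥ (zᵢ* - δᵢ)² - 2λ (zᵢ - zᵢ*)`, and the correction terms sum to zero since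
both vectors sum to `y`. The definition of `k*` says exactly that `δᵢ ≥ λ*` for `i ≤ k*`
and `δᵢ ≤ λ*` for `i > k*`, so `zᵢ* = δᵢ - λ*` on the head, `zᵢ* = 0` on the tail, and the
optimal value is `∑ min (λ*, δᵢ)² = k* λ*² + ∑_{i > k*} δᵢ²`.
-/

open Finset

section WaterFilling

variable {ι : Type*} (s : Finset ι) (δ : ι → ℝ) (l y : ℝ)

theorem sq_sub_max_sub_le_sq_sub {z d : ℝ} (hz : 0 ≤ z) :
    (max (d - l) 0 - d) ^ 2 - 2 * l * (z - max (d - l) 0) ≤ (z - d) ^ 2 := by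
  rcases le_total l d with h | h
  · rw [max_eq_left (sub_nonneg.mpr h)]
    nlinarith [sq_nonneg (z - d + l)]
  · rw [max_eq_right (sub_nonpos.mpr h)]
    nlinarith

theorem max_sub_sub_sq (d : ℝ) : (max (d - l) 0 - d) ^ 2 = min l d ^ 2 := by
  rcases le_total l d with h | h
  · rw [max_eq_left (sub_nonneg.mpr h), min_eq_left h]
    ring
  · rw [max_eq_right (sub_nonpos.mpr h), min_eq_right h]
    ring

theorem isLeast_sum_sq_sub_of_sum_max_sub_eq (h : ∑ i ∈ s, max (δ i - l) 0 = y) :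
    IsLeast {t : ℝ | ∃ z : ι → ℝ, (∀ i ∈ s, 0 ≤ z i) ∧
        ∑ i ∈ s, z i = y ∧ t = ∑ i ∈ s, (z i - δ i) ^ 2}
      (∑ i ∈ s, min l (δ i) ^ 2) := by
  refine ⟨⟨fun i => max (δ i - l) 0, fun i _ => le_max_right _ _, h, ?_⟩, ?_⟩
  · exact sum_congr rfl fun i _ => (max_sub_sub_sq l (δ i)).symm
  · rintro t ⟨z, hz, hzy, rfl⟩
    calc ∑ i ∈ s, min l (δ i) ^ 2
        = ∑ i ∈ s, ((max (δ i - l) 0 - δ i) ^ 2 - 2 * l * (z i - max (δ i - l) 0)) := by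
          rw [sum_sub_distrib, ← mul_sum, sum_sub_distrib, hzy, h]
          simp only [max_sub_sub_sq, sub_self, mul_zero, sub_zero]
      _ ≤ ∑ i ∈ s, (z i - δ i) ^ 2 :=
          sum_le_sum fun i hi => sq_sub_max_sub_le_sq_sub l (hz i hi)

end WaterFilling

section Threshold

variable (δ : ℕ → ℝ) {k n : ℕ} (l y : ℝ)

theorem sum_Icc_one_add_sum_Icc_succ {M : Type*} [AddCommMonoid M] (f : ℕ → M) (hkn : k ≤ n) :
    ∑ i ∈ Icc 1 k, f i + ∑ i ∈ Icc (k + 1) n, f i = ∑ i ∈ Icc 1 n, f i := by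
  simp only [Icc_add_one_left_eq_Ioc]
  exact sum_Ioc_consecutive f k.zero_le hkn

theorem sum_Icc_one_sub_const (c : ℝ) :
    ∑ i ∈ Icc 1 k, (δ i - c) = ∑ i ∈ Icc 1 k, δ i - k * c := by
  simp [sum_sub_distrib]

theorem div_lt_of_sum_Icc_sub_lt (hk : 0 < k) (h : ∑ i ∈ Icc 1 k, (δ i - δ k) < y) :
    (∑ i ∈ Icc 1 k, δ i - y) / k < δ k := by
  rw [sum_Icc_one_sub_const] at h
  rw [div_lt_iff₀ (by exact_mod_cast hk)]
  linarith

theorem le_div_of_le_sum_Icc_sub (hk : 0 < k)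
    (h : y ≤ ∑ i ∈ Icc 1 (k + 1), (δ i - δ (k + 1))) :
    δ (k + 1) ≤ (∑ i ∈ Icc 1 k, δ i - y) / k := by
  rw [sum_Icc_succ_top (by omega), sub_self, add_zero, sum_Icc_one_sub_const] at h
  rw [le_div_iff₀ (by exact_mod_cast hk)]
  linarith

variable {δ l}

theorem sum_max_sub_eq_of_threshold (hkn : k ≤ n) (hhead : ∀ i ∈ Icc 1 k, l ≤ δ i)
    (htail : ∀ i ∈ Icc (k + 1) n, δ i ≤ l) :
    ∑ i ∈ Icc 1 n, max (δ i - l) 0 = ∑ i ∈ Icc 1 k, δ i - k * l := by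
  rw [← sum_Icc_one_add_sum_Icc_succ _ hkn, ← sum_Icc_one_sub_const,
    sum_congr rfl fun i hi => max_eq_left (sub_nonneg.mpr (hhead i hi)),
    sum_eq_zero fun i hi => max_eq_right (sub_nonpos.mpr (htail i hi)), add_zero]

theorem sum_min_sq_eq_of_threshold (hkn : k ≤ n) (hhead : ∀ i ∈ Icc 1 k, l ≤ δ i)
    (htail : ∀ i ∈ Icc (k + 1) n, δ i ≤ l) :
    ∑ i ∈ Icc 1 n, min l (δ i) ^ 2 = k * l ^ 2 + ∑ i ∈ Icc (k + 1) n, δ i ^ 2 := by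
  have head : ∑ i ∈ Icc 1 k, min l (δ i) ^ 2 = ∑ i ∈ Icc 1 k, l ^ 2 :=
    sum_congr rfl fun i hi => by rw [min_eq_left (hhead i hi)]
  have tail : ∑ i ∈ Icc (k + 1) n, min l (δ i) ^ 2 = ∑ i ∈ Icc (k + 1) n, δ i ^ 2 :=
    sum_congr rfl fun i hi => by rw [min_eq_right (htail i hi)]
  rw [← sum_Icc_one_add_sum_Icc_succ _ hkn, head, tail]
  simp

end Threshold

theorem stmt17_general (n : ℕ) (y : ℝ) (δ : ℕ → ℝ)
    (hδ : ∀ i j, 1 ≤ i → i ≤ j → j ≤ n → δ j ≤ δ i)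
    (kstar : ℕ)
    (hk : (kstar ∈ Finset.Icc 1 n ∧ ∑ i ∈ Finset.Icc 1 kstar, (δ i - δ kstar) < y) ∧
      ∀ j, (j ∈ Finset.Icc 1 n ∧ ∑ i ∈ Finset.Icc 1 j, (δ i - δ j) < y) → j ≤ kstar)
    (lstar : ℝ) (hl : lstar = ((∑ i ∈ Finset.Icc 1 kstar, δ i) - y) / kstar) :
    IsLeast {s : ℝ | ∃ z : ℕ → ℝ, (∀ i ∈ Finset.Icc 1 n, 0 ≤ z i) ∧
        ∑ i ∈ Finset.Icc 1 n, z i = y ∧ s = ∑ i ∈ Finset.Icc 1 n, (z i - δ i) ^ 2}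
      ((kstar : ℝ) * lstar ^ 2 + ∑ i ∈ Finset.Icc (kstar + 1) n, (δ i) ^ 2) := by
  obtain ⟨⟨hkmem, hksum⟩, hkmax⟩ := hk
  obtain ⟨hk1, hkn⟩ := mem_Icc.mp hkmem
  have hlk : lstar < δ kstar := hl ▸ div_lt_of_sum_Icc_sub_lt δ y hk1 hksum
  have hhead : ∀ i ∈ Icc 1 kstar, lstar ≤ δ i := fun i hi =>
    hlk.le.trans (hδ i kstar (mem_Icc.mp hi).1 (mem_Icc.mp hi).2 hkn)
  have htail : ∀ i ∈ Icc (kstar + 1) n, δ i ≤ lstar := by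
    intro i hi
    obtain ⟨hi1, hin⟩ := mem_Icc.mp hi
    have hnext : y ≤ ∑ j ∈ Icc 1 (kstar + 1), (δ j - δ (kstar + 1)) :=
      not_lt.mp fun h => by have := hkmax _ ⟨mem_Icc.mpr ⟨by omega, by omega⟩, h⟩; omega
    exact (hδ _ _ (by omega) hi1 hin).trans (hl ▸ le_div_of_le_sum_Icc_sub δ y hk1 hnext)
  have hsum : ∑ i ∈ Icc 1 n, max (δ i - lstar) 0 = y := by
    rw [sum_max_sub_eq_of_threshold hkn hhead htail, hl]
    field_simp
    ring
  rw [← sum_min_sq_eq_of_threshold hkn hhead htail]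
  exact isLeast_sum_sq_sub_of_sum_max_sub_eq _ δ lstar y hsum

/-- The minimum of `∑ (yᵢ - δᵢ)²` over nonnegative vectors summing to `y`
equals `k*(λ*)² + ∑_{i=k*+1}^n δᵢ²`. -/
theorem stmt17 (n : ℕ) (hn : 1 ≤ n) (y : ℝ) (hy : 0 < y) (δ : ℕ → ℝ)
    (hδ : ∀ i j, 1 ≤ i → i ≤ j → j ≤ n → δ j ≤ δ i)
    (kstar : ℕ)
    (hk : (kstar ∈ Finset.Icc 1 n ∧ ∑ i ∈ Finset.Icc 1 kstar, (δ i - δ kstar) < y) ∧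
      ∀ j, (j ∈ Finset.Icc 1 n ∧ ∑ i ∈ Finset.Icc 1 j, (δ i - δ j) < y) → j ≤ kstar)
    (lstar : ℝ) (hl : lstar = ((∑ i ∈ Finset.Icc 1 kstar, δ i) - y) / kstar) :
    IsLeast {s : ℝ | ∃ z : ℕ → ℝ, (∀ i ∈ Finset.Icc 1 n, 0 ≤ z i) ∧
        ∑ i ∈ Finset.Icc 1 n, z i = y ∧ s = ∑ i ∈ Finset.Icc 1 n, (z i - δ i) ^ 2}
      ((kstar : ℝ) * lstar ^ 2 + ∑ i ∈ Finset.Icc (kstar + 1) n, (δ i) ^ 2) :=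
  stmt17_general n y δ hδ kstar hk lstar hl
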